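/- arXiv:2003.02103 — 7 statements merged into one kernel-verified Lean document; each statement's English description precedes it below -/
import Mathlib

section
/- Let B_1, ..., B_m be orthonormal bases of a finite-dimensional complex Hilbert space H of dimension d. Suppose the transition graph G on the disjoint union of these bases (where two basis vectors from different or same bases are adjacent iff they are non-orthogonal) is connected. If a linear operator M on H is diagonal with respect to each basis B_x (i.e., every vector in every B_x is an eigenvector of M), then M is a scalar multiple of the identity. -/
/-! Every basis `B x` diagonalises `M`, so comparing the `ψ`-coordinates of `M φ` shows that
non-orthogonal basis vectors `ψ ∈ B x` and `φ` carry the same eigenvalue. The eigenvalue is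
therefore constant along the edges of the transition graph, hence constant by connectivity,
and `M` acts as that constant on a whole basis. -/

open scoped InnerProductSpace

namespace Module.Basis

variable {ι R M : Type*} [CommRing R] [AddCommGroup M] [Module R M]

theorem repr_apply_eq_mul_of_forall_apply_eq_smul (b : Basis ι R M) {T : M →ₗ[R] M}
    {μ : ι → R} (hT : ∀ j, T (b j) = μ j • b j) (v : M) (i : ι) :
    b.repr (T v) i = μ i * b.repr v i := by
  have : Finsupp.lapply i ∘ₗ b.repr.toLinearMap ∘ₗ T
      = μ i • (Finsupp.lapply i ∘ₗ b.repr.toLinearMap) :=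
    b.ext fun j => by
      obtain rfl | hji := eq_or_ne j i
      · simp [hT]
      · simp [hT, hji]
  exact LinearMap.congr_fun this v

theorem eigenvalue_eq_of_repr_ne_zero [NoZeroDivisors R] (b : Basis ι R M) {T : M →ₗ[R] M}
    {μ : ι → R} (hT : ∀ j, T (b j) = μ j • b j) {v : M} {c : R} (hv : T v = c • v) {i : ι}
    (hvi : b.repr v i ≠ 0) : μ i = c := by
  have h := b.repr_apply_eq_mul_of_forall_apply_eq_smul hT v i
  rw [hv, map_smul, Finsupp.smul_apply, smul_eq_mul] at h
  exact (mul_right_cancel₀ hvi h).symm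

end Module.Basis

theorem SimpleGraph.Reachable.apply_eq_of_forall_adj {V β : Type*} {G : SimpleGraph V}
    {f : V → β} (hf : ∀ v w, G.Adj v w → f v = f w) {u v : V} (h : G.Reachable u v) :
    f u = f v := by
  obtain ⟨p⟩ := h
  induction p with
  | nil => rfl
  | cons hadj _ ih => exact (hf _ _ hadj).trans ih

theorem stmt_3_general (d m : ℕ)
    (B : Fin m → OrthonormalBasis (Fin d) ℂ (EuclideanSpace ℂ (Fin d)))
    (G : SimpleGraph (Fin m × Fin d))
    (hG : ∀ v w, G.Adj v w ↔ v ≠ w ∧ ⟪B v.1 v.2, B w.1 w.2⟫_ℂ ≠ 0)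
    (hconn : G.Connected)
    (M : Matrix (Fin d) (Fin d) ℂ)
    (hM : ∀ x k, ∃ c : ℂ, M.mulVec (fun i => B x k i) = c • (fun i => B x k i)) :
    ∃ c : ℂ, M = c • (1 : Matrix (Fin d) (Fin d) ℂ) := by
  choose μ hμ using hM
  have heig : ∀ x k, M.toEuclideanLin (B x k) = μ x k • B x k := fun x k =>
    congrArg (WithLp.toLp 2) (hμ x k)
  have hadj : ∀ v w, G.Adj v w → μ v.1 v.2 = μ w.1 w.2 := fun v w hvw =>
    (B v.1).toBasis.eigenvalue_eq_of_repr_ne_zero (heig v.1) (heig w.1 w.2) <| by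
      simpa [(B v.1).repr_apply_apply] using ((hG v w).1 hvw).2
  obtain ⟨x₀, k₀⟩ := hconn.nonempty.some
  refine ⟨μ x₀ k₀, Matrix.toEuclideanLin.injective ((B x₀).toBasis.ext fun k => ?_)⟩
  have hk : μ x₀ k₀ = μ x₀ k :=
    (hconn.preconnected (x₀, k₀) (x₀, k)).apply_eq_of_forall_adj (f := fun v => μ v.1 v.2) hadj
  simp [heig, hk]

theorem stmt_3 (d m : ℕ) (hd : 0 < d)
    (B : Fin m → OrthonormalBasis (Fin d) ℂ (EuclideanSpace ℂ (Fin d)))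
    (G : SimpleGraph (Fin m × Fin d))
    (hG : ∀ v w, G.Adj v w ↔ v ≠ w ∧ ⟪B v.1 v.2, B w.1 w.2⟫_ℂ ≠ 0)
    (hconn : G.Connected)
    (M : Matrix (Fin d) (Fin d) ℂ)
    (hM : ∀ x k, ∃ c : ℂ, M.mulVec (fun i => B x k i) = c • (fun i => B x k i)) :
    ∃ c : ℂ, M = c • (1 : Matrix (Fin d) (Fin d) ℂ) :=
  stmt_3_general d m B G hG hconn M hM
end

section
/- Let ρ be a density operator on a d-dimensional complex Hilbert space, and suppose ρ is diagonal with respect to each of m orthonormal bases B_1,...,B_m whose transition graph is connected. Then ρ = (1/d) I, the maximally mixed state. -/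
open scoped InnerProductSpace ComplexOrder

/-! Eigenvectors of a Hermitian operator with distinct eigenvalues are orthogonal, so the eigenvalue
of ρ is constant along the edges of the transition graph, hence on all of it. Thus ρ acts as one
scalar on a whole basis, i.e. ρ = c • 1, and trace 1 forces c = 1/d. -/

theorem SimpleGraph.Preconnected.eq_of_forall_adj {V α : Type*} {G : SimpleGraph V}
    (hG : G.Preconnected) {f : V → α} (hf : ∀ v w, G.Adj v w → f v = f w) (v w : V) :
    f v = f w := by
  obtain ⟨p⟩ := hG v w
  induction p with
  | nil => rfl
  | cons h _ ih => exact (hf _ _ h).trans ih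

theorem LinearMap.IsSymmetric.eq_of_inner_ne_zero {𝕜 E : Type*} [RCLike 𝕜]
    [NormedAddCommGroup E] [InnerProductSpace 𝕜 E] {T : E →ₗ[𝕜] E} (hT : T.IsSymmetric)
    {u v : E} {a b : 𝕜} (hu : T u = a • u) (hv : T v = b • v) (huv : ⟪u, v⟫_𝕜 ≠ 0) :
    a = b := by
  by_contra hab
  exact huv (hT.orthogonalFamily_eigenspaces hab
    ⟨u, Module.End.mem_eigenspace_iff.mpr hu⟩ ⟨v, Module.End.mem_eigenspace_iff.mpr hv⟩)

theorem Matrix.eq_smul_one_of_toEuclideanLin_basis {𝕜 n ι : Type*} [RCLike 𝕜] [Fintype n]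
    [DecidableEq n] {A : Matrix n n 𝕜} {c : 𝕜} (b : Module.Basis ι 𝕜 (EuclideanSpace 𝕜 n))
    (hb : ∀ i, A.toEuclideanLin (b i) = c • b i) : A = c • 1 := by
  apply Matrix.toEuclideanLin.injective
  refine b.ext fun i => ?_
  simpa using hb i

theorem stmt_6_general (d m : ℕ)
    (B : Fin m → OrthonormalBasis (Fin d) ℂ (EuclideanSpace ℂ (Fin d)))
    (G : SimpleGraph (Fin m × Fin d))
    (hG : ∀ v w, G.Adj v w ↔ v ≠ w ∧ ⟪B v.1 v.2, B w.1 w.2⟫_ℂ ≠ 0)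
    (hconn : G.Connected)
    (ρ : Matrix (Fin d) (Fin d) ℂ) (hpsd : ρ.PosSemidef) (htr : ρ.trace = 1)
    (hdiag : ∀ x k, ∃ c : ℂ, ρ.mulVec (fun i => B x k i) = c • (fun i => B x k i)) :
    ρ = ((d : ℂ))⁻¹ • (1 : Matrix (Fin d) (Fin d) ℂ) := by
  choose c hc using hdiag
  have hT : ρ.toEuclideanLin.IsSymmetric :=
    Matrix.isSymmetric_toEuclideanLin_iff.mpr hpsd.isHermitian
  have heig : ∀ x k, ρ.toEuclideanLin (B x k) = c x k • B x k := fun x k => by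
    ext i
    simpa using congrFun (hc x k) i
  have hconst := hconn.preconnected.eq_of_forall_adj (f := fun v => c v.1 v.2)
    fun v w h => hT.eq_of_inner_ne_zero (heig _ _) (heig _ _) ((hG v w).1 h).2
  obtain ⟨v₀⟩ := hconn.nonempty
  have hρ : ρ = c v₀.1 v₀.2 • 1 :=
    Matrix.eq_smul_one_of_toEuclideanLin_basis (B v₀.1).toBasis fun k => by
      simpa [hconst (v₀.1, k) v₀] using heig v₀.1 k
  have hcd : c v₀.1 v₀.2 * d = 1 := by simpa [hρ] using htr
  rw [hρ, eq_inv_of_mul_eq_one_left hcd]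

theorem stmt_6 (d m : ℕ) (hd : 0 < d)
    (B : Fin m → OrthonormalBasis (Fin d) ℂ (EuclideanSpace ℂ (Fin d)))
    (G : SimpleGraph (Fin m × Fin d))
    (hG : ∀ v w, G.Adj v w ↔ v ≠ w ∧ ⟪B v.1 v.2, B w.1 w.2⟫_ℂ ≠ 0)
    (hconn : G.Connected)
    (ρ : Matrix (Fin d) (Fin d) ℂ) (hpsd : ρ.PosSemidef) (htr : ρ.trace = 1)
    (hdiag : ∀ x k, ∃ c : ℂ, ρ.mulVec (fun i => B x k i) = c • (fun i => B x k i)) :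
    ρ = ((d : ℂ))⁻¹ • (1 : Matrix (Fin d) (Fin d) ℂ) :=
  stmt_6_general d m B G hG hconn ρ hpsd htr hdiag
end

section
/- Let B_x, μ_x, Ω be as follows: B_x = {ψ_{xk}} are m orthonormal bases of ℂ^d, μ_x > 0 sum to 1, and Ω = Σ_{x,k} μ_x |ψ_{xk}⟩⟨ψ_{xk}| ⊗ |ψ*_{xk}⟩⟨ψ*_{xk}|. Every eigenvalue of Ω is at most 1, and the multiplicity of the eigenvalue 1 equals the number of connected components of the transition graph of the basis set {B_x} (vertices are the md pairs (x,k), with (x,k) ≠ (y,l) adjacent iff ⟨ψ_{xk}, ψ_{yl}⟩ ≠ 0). -/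
/-
`Ω = ∑ₓ μₓ Pₓ`, where `Pₓ` is the orthogonal projection onto `Kₓ = span {ψₓₖ ⊗ ψₓₖ*}ₖ`.
Hence `⟪v, Ω v⟫ = ∑ₓ μₓ ‖Pₓ v‖² ≤ ‖v‖²`, which bounds the eigenvalues by `1`, with equality
exactly when `v ∈ ⋂ₓ Kₓ`. Under the vectorisation `ψ ⊗ φ* ↦ |ψ⟩⟨φ|`, `Kₓ` becomes the space of
operators that are diagonal in the basis `Bₓ`. An operator diagonal in both `Bₓ` and `B_y` has
the same eigenvalue on `ψₓₖ` and `ψ_yl` whenever these are not orthogonal, so its eigenvalues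
are constant on the connected components of the transition graph; conversely every function
on the components defines such an operator. So `⋂ₓ Kₓ` is isomorphic to the functions on
the components.
-/

open scoped InnerProductSpace

/-- The rank-one operator `w ↦ ⟪v, w⟫ • v`. -/
noncomputable def rankOneOp {E : Type*} [NormedAddCommGroup E] [InnerProductSpace ℂ E]
    (v : E) : E →ₗ[ℂ] E :=
  ((innerSL ℂ v).toLinearMap).smulRight v

/-- The vector `ψ ⊗ ψ*` in `ℂ^d ⊗ ℂ^d ≅ ℂ^(d×d)`. -/
noncomputable def conjPair (d : ℕ) (v : EuclideanSpace ℂ (Fin d)) :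
    EuclideanSpace ℂ (Fin d × Fin d) :=
  WithLp.toLp 2 (fun p : Fin d × Fin d => v p.1 * star (v p.2))

open Submodule Set

section WeightedProjections

variable {E : Type*} [NormedAddCommGroup E] [InnerProductSpace ℂ E] {ι : Type*} [Fintype ι]

lemma Submodule.inner_starProjection_self (K : Submodule ℂ E) [K.HasOrthogonalProjection]
    (v : E) : ⟪v, K.starProjection v⟫_ℂ = ((‖K.starProjection v‖ ^ 2 : ℝ) : ℂ) := by
  have hP : K.starProjection (K.starProjection v) = K.starProjection v :=
    K.starProjection_eq_self_iff.mpr (K.starProjection_apply_mem v)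
  rw [← hP, ← inner_starProjection_left_eq_right, hP, inner_self_eq_norm_sq_to_K]
  norm_cast

variable (K : ι → Submodule ℂ E) [∀ x, (K x).HasOrthogonalProjection] (μ : ι → ℝ)

lemma inner_sum_smul_starProjection (v : E) :
    ⟪v, ∑ x, (μ x : ℂ) • (K x).starProjection v⟫_ℂ
      = ((∑ x, μ x * ‖(K x).starProjection v‖ ^ 2 : ℝ) : ℂ) := by
  simp [Submodule.inner_starProjection_self]

lemma sum_mul_norm_starProjection_sq_le (hμ : ∀ x, 0 ≤ μ x) (hsum : ∑ x, μ x = 1) (v : E) :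
    ∑ x, μ x * ‖(K x).starProjection v‖ ^ 2 ≤ ‖v‖ ^ 2 :=
  calc ∑ x, μ x * ‖(K x).starProjection v‖ ^ 2 ≤ ∑ x, μ x * ‖v‖ ^ 2 := by
        gcongr with x
        · exact hμ x
        · exact (K x).norm_starProjection_apply_le v
    _ = ‖v‖ ^ 2 := by rw [← Finset.sum_mul, hsum, one_mul]

lemma im_eq_zero_and_re_le_one_of_sum_smul_starProjection_eq_smul (hμ : ∀ x, 0 ≤ μ x)
    (hsum : ∑ x, μ x = 1) {c : ℂ} {v : E} (hv : v ≠ 0)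
    (hc : ∑ x, (μ x : ℂ) • (K x).starProjection v = c • v) : c.im = 0 ∧ c.re ≤ 1 := by
  set r := ∑ x, μ x * ‖(K x).starProjection v‖ ^ 2
  have hv2 : 0 < ‖v‖ ^ 2 := by positivity
  have hcr : c = ((r / ‖v‖ ^ 2 : ℝ) : ℂ) := by
    have h := inner_sum_smul_starProjection K μ v
    rw [hc, inner_smul_right, inner_self_eq_norm_sq_to_K] at h
    rw [Complex.ofReal_div, eq_div_iff (by exact_mod_cast hv2.ne'), ← h]
    norm_cast
  rw [hcr, Complex.ofReal_im, Complex.ofReal_re, div_le_one hv2]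
  exact ⟨rfl, sum_mul_norm_starProjection_sq_le K μ hμ hsum v⟩

lemma sum_smul_starProjection_eq_self_iff (hμ : ∀ x, 0 < μ x) (hsum : ∑ x, μ x = 1) (v : E) :
    ∑ x, (μ x : ℂ) • (K x).starProjection v = v ↔ ∀ x, v ∈ K x := by
  refine ⟨fun hv x => ?_, fun hv => ?_⟩
  · have h := inner_sum_smul_starProjection K μ v
    rw [hv, inner_self_eq_norm_sq_to_K] at h
    norm_cast at h
    have hr : ∑ x, μ x * (‖v‖ ^ 2 - ‖(K x).starProjection v‖ ^ 2) = 0 := by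
      simp only [mul_sub, Finset.sum_sub_distrib, ← Finset.sum_mul, hsum, one_mul]
      exact sub_eq_zero.mpr (Complex.ofReal_injective h)
    have hx := (Finset.sum_eq_zero_iff_of_nonneg fun y _ => mul_nonneg (hμ y).le
      (sub_nonneg.mpr (pow_le_pow_left₀ (norm_nonneg _)
        ((K y).norm_starProjection_apply_le v) 2))).mp hr x (Finset.mem_univ x)
    rw [mem_iff_norm_starProjection, ← sq_eq_sq₀ (norm_nonneg _) (norm_nonneg _)]
    linarith [(mul_eq_zero.mp hx).resolve_left (hμ x).ne']
  · simp only [(K _).starProjection_eq_self_iff.mpr (hv _), ← Finset.sum_smul,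
      ← Complex.ofReal_sum, hsum, Complex.ofReal_one, one_smul]

end WeightedProjections

lemma Orthonormal.starProjection_span_apply {𝕜 E ι : Type*} [RCLike 𝕜] [NormedAddCommGroup E]
    [InnerProductSpace 𝕜 E] [Fintype ι] {f : ι → E} (hf : Orthonormal 𝕜 f)
    [(span 𝕜 (range f)).HasOrthogonalProjection] (v : E) :
    (span 𝕜 (range f)).starProjection v = ∑ i, ⟪f i, v⟫_𝕜 • f i := by
  let b : OrthonormalBasis ι 𝕜 (span 𝕜 (range f)) :=
    (Module.Basis.span hf.linearIndependent).toOrthonormalBasis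
      (by convert orthonormal_span hf using 1 <;> first
        | rfl | exact funext (Module.Basis.span_apply _))
  have hb : ∀ i, (b i : E) = f i := by simp [b, Module.Basis.span_apply]
  simp [starProjection_apply, b.orthogonalProjectionOnto_apply_eq_sum, hb]

section DiagonalOperators

variable {E : Type*} [NormedAddCommGroup E] [InnerProductSpace ℂ E] {κ : Type*} [Fintype κ]

noncomputable def diagonalOp (b : κ → E) (c : κ → ℂ) : E →ₗ[ℂ] E :=
  ∑ k, c k • rankOneOp (b k)

lemma diagonalOp_apply (b : κ → E) (c : κ → ℂ) (v : E) :
    diagonalOp b c v = ∑ k, (c k * ⟪b k, v⟫_ℂ) • b k := by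
  simp [diagonalOp, rankOneOp, mul_smul]

lemma Orthonormal.inner_diagonalOp_apply {b : κ → E} (hb : Orthonormal ℂ b) (c : κ → ℂ)
    (k : κ) (v : E) : ⟪b k, diagonalOp b c v⟫_ℂ = c k * ⟪b k, v⟫_ℂ := by
  rw [diagonalOp_apply, hb.inner_right_fintype]

lemma OrthonormalBasis.diagonalOp_apply_self (b : OrthonormalBasis κ ℂ E) (c : κ → ℂ) (j : κ) :
    diagonalOp b c (b j) = c j • b j := by
  classical
  simp [diagonalOp_apply, orthonormal_iff_ite.mp b.orthonormal]

lemma OrthonormalBasis.diagonalOp_eq_diagonalOp_iff (b b' : OrthonormalBasis κ ℂ E)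
    (c c' : κ → ℂ) :
    diagonalOp b c = diagonalOp b' c' ↔ ∀ k l, ⟪b k, b' l⟫_ℂ ≠ 0 → c k = c' l := by
  have key : ∀ k l, ⟪b k, diagonalOp b c (b' l)⟫_ℂ = c k * ⟪b k, b' l⟫_ℂ ∧
      ⟪b k, diagonalOp b' c' (b' l)⟫_ℂ = c' l * ⟪b k, b' l⟫_ℂ := fun k l =>
    ⟨b.orthonormal.inner_diagonalOp_apply c k _, by
      rw [b'.diagonalOp_apply_self, inner_smul_right]⟩
  refine ⟨fun h k l hkl => mul_right_cancel₀ hkl ?_, fun h => ?_⟩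
  · rw [← (key k l).1, ← (key k l).2, h]
  · refine b'.toBasis.ext fun l => InnerProductSpace.ext_inner_left_basis b.toBasis fun k => ?_
    simp only [OrthonormalBasis.coe_toBasis, (key k l).1, (key k l).2]
    by_cases hkl : ⟪b k, b' l⟫_ℂ = 0
    · simp [hkl]
    · rw [h k l hkl]

end DiagonalOperators

section Vectorization

variable {d : ℕ}

noncomputable def unvec (d : ℕ) :
    EuclideanSpace ℂ (Fin d × Fin d) ≃ₗ[ℂ] Module.End ℂ (EuclideanSpace ℂ (Fin d)) :=
  WithLp.linearEquiv 2 ℂ _ ≪≫ₗ LinearEquiv.curry ℂ ℂ (Fin d) (Fin d) ≪≫ₗ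
    Matrix.ofLinearEquiv ℂ ≪≫ₗ Matrix.toLpLin 2 2

lemma unvec_conjPair (u : EuclideanSpace ℂ (Fin d)) : unvec d (conjPair d u) = rankOneOp u := by
  ext w i
  simp [unvec, conjPair, rankOneOp, PiLp.inner_apply, Matrix.mulVec, dotProduct, Finset.mul_sum,
    LinearEquiv.coe_curry, Matrix.ofLinearEquiv, mul_comm, mul_left_comm]

lemma inner_conjPair (u w : EuclideanSpace ℂ (Fin d)) :
    ⟪conjPair d u, conjPair d w⟫_ℂ = ((‖⟪u, w⟫_ℂ‖ ^ 2 : ℝ) : ℂ) := by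
  simp only [conjPair, PiLp.inner_apply, RCLike.inner_apply, RCLike.star_def, map_mul,
    RingHomCompTriple.comp_apply, RingHom.id_apply, Fintype.sum_prod_type, Complex.ofReal_pow,
    ← Complex.mul_conj', map_sum, Finset.sum_mul_sum]
  exact Finset.sum_congr rfl fun _ _ => Finset.sum_congr rfl fun _ _ => by ring

lemma Orthonormal.conjPair {κ : Type*} {b : κ → EuclideanSpace ℂ (Fin d)}
    (hb : Orthonormal ℂ b) : Orthonormal ℂ fun k => conjPair d (b k) := by
  classical
  rw [orthonormal_iff_ite] at hb ⊢
  intro k l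
  rw [inner_conjPair, hb k l]
  split_ifs <;> simp

end Vectorization

section TransitionGraph

variable {E : Type*} [NormedAddCommGroup E] [InnerProductSpace ℂ E] {ι κ : Type*} [Fintype κ]

def transitionGraph (ψ : ι → OrthonormalBasis κ ℂ E) : SimpleGraph (ι × κ) where
  Adj a b := a ≠ b ∧ ⟪ψ a.1 a.2, ψ b.1 b.2⟫_ℂ ≠ 0
  symm.symm _ _ h := ⟨h.1.symm, fun h' => h.2 (inner_eq_zero_symm.mp h')⟩
  loopless.irrefl _ h := h.1 rfl

lemma connectedComponentMk_eq_of_inner_ne_zero (ψ : ι → OrthonormalBasis κ ℂ E) {a b : ι × κ}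
    (h : ⟪ψ a.1 a.2, ψ b.1 b.2⟫_ℂ ≠ 0) :
    (transitionGraph ψ).connectedComponentMk a = (transitionGraph ψ).connectedComponentMk b := by
  rcases eq_or_ne a b with rfl | hab
  · rfl
  · exact SimpleGraph.ConnectedComponent.eq.mpr (SimpleGraph.Adj.reachable ⟨hab, h⟩)

end TransitionGraph

section ComponentSum

variable {ι : Type*} {d : ℕ} (ψ : ι → OrthonormalBasis (Fin d) ℂ (EuclideanSpace ℂ (Fin d)))

noncomputable def componentSum (x : ι) :
    ((transitionGraph ψ).ConnectedComponent → ℂ) →ₗ[ℂ] EuclideanSpace ℂ (Fin d × Fin d) :=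
  Fintype.linearCombination ℂ (fun k => conjPair d (ψ x k)) ∘ₗ
    LinearMap.funLeft ℂ ℂ fun k => (transitionGraph ψ).connectedComponentMk (x, k)

lemma componentSum_apply (x : ι) (f : (transitionGraph ψ).ConnectedComponent → ℂ) :
    componentSum ψ x f
      = ∑ k, f ((transitionGraph ψ).connectedComponentMk (x, k)) • conjPair d (ψ x k) :=
  rfl

lemma unvec_componentSum (x : ι) (f : (transitionGraph ψ).ConnectedComponent → ℂ) :
    unvec d (componentSum ψ x f)
      = diagonalOp (ψ x) fun k => f ((transitionGraph ψ).connectedComponentMk (x, k)) := by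
  simp [componentSum_apply, diagonalOp, unvec_conjPair]

lemma componentSum_eq_componentSum (x y : ι) : componentSum ψ x = componentSum ψ y := by
  refine LinearMap.ext fun f => (unvec d).injective ?_
  rw [unvec_componentSum, unvec_componentSum]
  refine ((ψ x).diagonalOp_eq_diagonalOp_iff (ψ y) _ _).mpr fun k l hkl => ?_
  rw [connectedComponentMk_eq_of_inner_ne_zero ψ (a := (x, k)) (b := (y, l)) hkl]

lemma inner_conjPair_componentSum (x : ι) (k : Fin d)
    (f : (transitionGraph ψ).ConnectedComponent → ℂ) :
    ⟪conjPair d (ψ x k), componentSum ψ x f⟫_ℂ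
      = f ((transitionGraph ψ).connectedComponentMk (x, k)) :=
  (ψ x).orthonormal.conjPair.inner_right_fintype _ k

lemma componentSum_injective (x : ι) : Function.Injective (componentSum ψ x) := by
  refine (injective_iff_map_eq_zero _).mpr fun f hf => funext fun C => ?_
  induction C using SimpleGraph.ConnectedComponent.ind with | h a => ?_
  have h := inner_conjPair_componentSum ψ a.1 a.2 f
  rwa [componentSum_eq_componentSum ψ a.1 x, hf, inner_zero_right, eq_comm] at h

lemma range_componentSum (x : ι) :
    LinearMap.range (componentSum ψ x) = ⨅ y, span ℂ (range fun k => conjPair d (ψ y k)) := by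
  refine le_antisymm ?_ fun v hv => ?_
  · rintro _ ⟨f, rfl⟩
    refine mem_iInf _ |>.mpr fun y => ?_
    rw [componentSum_eq_componentSum ψ x y, componentSum_apply]
    exact sum_mem fun k _ => smul_mem _ _ (subset_span (mem_range_self k))
  set c : ι × Fin d → ℂ := fun a => ⟪conjPair d (ψ a.1 a.2), v⟫_ℂ
  have hexp : ∀ y, ∑ k, c (y, k) • conjPair d (ψ y k) = v := fun y => by
    rw [← (ψ y).orthonormal.conjPair.starProjection_span_apply,
      starProjection_eq_self_iff.mpr (mem_iInf _ |>.mp hv y)]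
  have hunvec : ∀ y, unvec d v = diagonalOp (ψ y) fun k => c (y, k) := fun y => by
    conv_lhs => rw [← hexp y]
    simp [diagonalOp, unvec_conjPair]
  have hwalk : ∀ a b, (transitionGraph ψ).Walk a b → c a = c b := by
    intro a b p
    induction p with
    | nil => rfl
    | cons hab _ ih =>
      refine Eq.trans ?_ ih
      exact ((ψ _).diagonalOp_eq_diagonalOp_iff (ψ _) _ _).mp
        ((hunvec _).symm.trans (hunvec _)) _ _ hab.2
  refine ⟨SimpleGraph.ConnectedComponent.lift c fun a b p _ => hwalk a b p, ?_⟩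
  simpa [componentSum_apply] using hexp x

lemma finrank_iInf_span_conjPair [Finite ι] [Nonempty ι] :
    Module.finrank ℂ (⨅ y, span ℂ (range fun k => conjPair d (ψ y k)) : Submodule ℂ _)
      = Nat.card (transitionGraph ψ).ConnectedComponent := by
  classical
  have := Fintype.ofFinite ι
  obtain ⟨x⟩ := ‹Nonempty ι›
  rw [← range_componentSum ψ x, LinearMap.finrank_range_of_inj (componentSum_injective ψ x),
    Module.finrank_fintype_fun_eq_card, Nat.card_eq_fintype_card]

end ComponentSum

theorem stmt_10_general (d m : ℕ)
    (ψ : Fin m → OrthonormalBasis (Fin d) ℂ (EuclideanSpace ℂ (Fin d)))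
    (μ : Fin m → ℝ) (hμ : ∀ x, 0 < μ x) (hsum : ∑ x, μ x = 1)
    (Ω : EuclideanSpace ℂ (Fin d × Fin d) →ₗ[ℂ] EuclideanSpace ℂ (Fin d × Fin d))
    (hΩ : Ω = ∑ x, ∑ k, (μ x : ℂ) • rankOneOp (conjPair d (ψ x k)))
    (G : SimpleGraph (Fin m × Fin d))
    (hG : ∀ v w, G.Adj v w ↔ v ≠ w ∧ ⟪ψ v.1 v.2, ψ w.1 w.2⟫_ℂ ≠ 0) :
    (∀ (c : ℂ) (v : EuclideanSpace ℂ (Fin d × Fin d)),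
        v ≠ 0 → Ω v = c • v → c.im = 0 ∧ c.re ≤ 1) ∧
      Module.finrank ℂ (Module.End.eigenspace Ω 1) = Nat.card G.ConnectedComponent := by
  have : Nonempty (Fin m) := by
    by_contra h
    simp [not_nonempty_iff.mp h] at hsum
  obtain rfl : G = transitionGraph ψ := SimpleGraph.ext (funext₂ fun a b => propext (hG a b))
  set K := fun x => span ℂ (range fun k => conjPair d (ψ x k))
  have hΩK : ∀ v, Ω v = ∑ x, (μ x : ℂ) • (K x).starProjection v := fun v => by
    simp [K, hΩ, (ψ _).orthonormal.conjPair.starProjection_span_apply, rankOneOp, Finset.smul_sum]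
  refine ⟨fun c v hv hc => ?_, ?_⟩
  · exact im_eq_zero_and_re_le_one_of_sum_smul_starProjection_eq_smul K μ (fun x => (hμ x).le)
      hsum hv ((hΩK v).symm.trans hc)
  · have hfix : Module.End.eigenspace Ω 1 = ⨅ x, K x := by
      ext v
      rw [Module.End.mem_eigenspace_iff, one_smul, hΩK,
        sum_smul_starProjection_eq_self_iff K μ hμ hsum, mem_iInf]
    rw [hfix, finrank_iInf_span_conjPair]

theorem stmt_10 (d m : ℕ) (hd : 0 < d) (hm : 0 < m)
    (ψ : Fin m → OrthonormalBasis (Fin d) ℂ (EuclideanSpace ℂ (Fin d)))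
    (μ : Fin m → ℝ) (hμ : ∀ x, 0 < μ x) (hsum : ∑ x, μ x = 1)
    (Ω : EuclideanSpace ℂ (Fin d × Fin d) →ₗ[ℂ] EuclideanSpace ℂ (Fin d × Fin d))
    (hΩ : Ω = ∑ x, ∑ k, (μ x : ℂ) • rankOneOp (conjPair d (ψ x k)))
    (G : SimpleGraph (Fin m × Fin d))
    (hG : ∀ v w, G.Adj v w ↔ v ≠ w ∧ ⟪ψ v.1 v.2, ψ w.1 w.2⟫_ℂ ≠ 0) :
    (∀ (c : ℂ) (v : EuclideanSpace ℂ (Fin d × Fin d)),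
        v ≠ 0 → Ω v = c • v → c.im = 0 ∧ c.re ≤ 1) ∧
      Module.finrank ℂ (Module.End.eigenspace Ω 1) = Nat.card G.ConnectedComponent :=
  stmt_10_general d m ψ μ hμ hsum Ω hΩ G hG
end

section
/- Let Ψ_s and Ψ_t be two maximally entangled unit vectors in ℂ^{d_A} ⊗ ℂ^{d_B} (each with reduced A-state equal to (1/d_A)I). If both (Ψ_s + Ψ_t)/√2 and (Ψ_s + i Ψ_t)/√2 are also maximally entangled unit vectors, then Tr_A(|Ψ_s⟩⟨Ψ_s|) and Tr_A(|Ψ_t⟩⟨Ψ_t|) have orthogonal supports. -/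
/-- A unit vector in `ℂ^{dA} ⊗ ℂ^{dB} ≅ ℂ^(dA×dB)` is maximally entangled if its
reduced state on the first factor is the maximally mixed state `(1/dA) I`. -/
def IsMaxEnt (dA dB : ℕ) (Ψ : EuclideanSpace ℂ (Fin dA × Fin dB)) : Prop :=
  ‖Ψ‖ = 1 ∧ ∀ a a', (∑ b, Ψ (a, b) * star (Ψ (a', b))) =
    if a = a' then ((dA : ℂ))⁻¹ else 0

/-
The entries of the reduced operator `Tr_B |Ψ⟩⟨Φ|` form a sesquilinear form in `(Ψ, Φ)`.
Maximal entanglement of `Ψs`, `Ψt` and of `(Ψs + Ψt)/√2`, `(Ψs + iΨt)/√2` says that this form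
is additive on the diagonal along `Ψs + Ψt` and `Ψs + iΨt`; by polarization the cross terms
`Tr_B |Ψt⟩⟨Ψs|` then vanish, which is exactly orthogonality of the supports.
-/

open Complex ComplexConjugate

namespace LinearMap

variable {M : Type*} [AddCommGroup M] [Module ℂ M]

theorem apply_add_add (B : M →ₗ[ℂ] M →ₗ⋆[ℂ] ℂ) (x y : M) :
    B (x + y) (x + y) = B x x + B x y + B y x + B y y := by
  simp only [map_add, add_apply]
  ring

theorem apply_add_I_smul_add_I_smul (B : M →ₗ[ℂ] M →ₗ⋆[ℂ] ℂ) (x y : M) :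
    B (x + I • y) (x + I • y) = B x x - I * B x y + I * B y x + B y y := by
  simp only [map_add, map_smul, map_smulₛₗ, add_apply, smul_apply, smul_eq_mul, conj_I]
  linear_combination (-B y y) * I_mul_I

theorem apply_smul_smul (B : M →ₗ[ℂ] M →ₗ⋆[ℂ] ℂ) (c : ℂ) (x : M) :
    B (c • x) (c • x) = c * conj c * B x x := by
  simp only [map_smul, map_smulₛₗ, smul_apply, smul_eq_mul]
  ring

theorem apply_eq_zero_of_polarization (B : M →ₗ[ℂ] M →ₗ⋆[ℂ] ℂ) {x y : M}
    (h₁ : B (x + y) (x + y) = B x x + B y y)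
    (hI : B (x + I • y) (x + I • y) = B x x + B y y) : B y x = 0 := by
  rw [apply_add_add] at h₁
  rw [apply_add_I_smul_add_I_smul] at hI
  -- `h₁` says `B x y + B y x = 0` and `hI` says `B x y = B y x`.
  linear_combination h₁ / 2 - I * hI / 2 + (B y x - B x y) / 2 * I_mul_I

end LinearMap

/-- `reducedForm dA dB a a' Ψ Φ` is the `(a, a')` entry of `Tr_B |Ψ⟩⟨Φ|`. -/
def reducedForm (dA dB : ℕ) (a a' : Fin dA) :
    EuclideanSpace ℂ (Fin dA × Fin dB) →ₗ[ℂ] EuclideanSpace ℂ (Fin dA × Fin dB) →ₗ⋆[ℂ] ℂ :=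
  LinearMap.mk₂'ₛₗ (RingHom.id ℂ) (starRingEnd ℂ) (fun Ψ Φ => ∑ b, Ψ (a, b) * star (Φ (a', b)))
    (fun _ _ _ => by simp only [PiLp.add_apply, add_mul, Finset.sum_add_distrib])
    (fun _ _ _ => by simp only [PiLp.smul_apply, smul_eq_mul, mul_assoc, Finset.mul_sum]; rfl)
    (fun _ _ _ => by simp only [PiLp.add_apply, star_add, mul_add, Finset.sum_add_distrib])
    (fun _ _ _ => by
      simp only [PiLp.smul_apply, smul_eq_mul, star_mul', Finset.mul_sum]
      exact Finset.sum_congr rfl fun _ _ => by rw [starRingEnd_apply]; ring)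

theorem reducedForm_apply {dA dB : ℕ} (a a' : Fin dA)
    (Ψ Φ : EuclideanSpace ℂ (Fin dA × Fin dB)) :
    reducedForm dA dB a a' Ψ Φ = ∑ b, Ψ (a, b) * star (Φ (a', b)) :=
  rfl

namespace IsMaxEnt

variable {dA dB : ℕ} {Ψ Φ Χ : EuclideanSpace ℂ (Fin dA × Fin dB)}

theorem reducedForm_self (h : IsMaxEnt dA dB Ψ) (a a' : Fin dA) :
    reducedForm dA dB a a' Ψ Ψ = if a = a' then ((dA : ℂ))⁻¹ else 0 :=
  h.2 a a'

theorem reducedForm_self_eq_add (hΨ : IsMaxEnt dA dB Ψ) (hΦ : IsMaxEnt dA dB Φ)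
    (hΧ : IsMaxEnt dA dB (((Real.sqrt 2 : ℂ))⁻¹ • Χ)) (a a' : Fin dA) :
    reducedForm dA dB a a' Χ Χ = reducedForm dA dB a a' Ψ Ψ + reducedForm dA dB a a' Φ Φ := by
  have hhalf : ((Real.sqrt 2 : ℂ))⁻¹ * conj ((Real.sqrt 2 : ℂ))⁻¹ = 2⁻¹ := by
    rw [map_inv₀, conj_ofReal, ← mul_inv, ← ofReal_mul, Real.mul_self_sqrt zero_le_two]
    norm_num
  have h := hΧ.reducedForm_self a a'
  rw [LinearMap.apply_smul_smul, hhalf] at h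
  rw [hΨ.reducedForm_self, hΦ.reducedForm_self]
  linear_combination 2 * h

end IsMaxEnt

theorem stmt_14 (dA dB : ℕ)
    (Ψs Ψt : EuclideanSpace ℂ (Fin dA × Fin dB))
    (hs : IsMaxEnt dA dB Ψs) (ht : IsMaxEnt dA dB Ψt)
    (hplus : IsMaxEnt dA dB (((Real.sqrt 2 : ℂ))⁻¹ • (Ψs + Ψt)))
    (hplusI : IsMaxEnt dA dB (((Real.sqrt 2 : ℂ))⁻¹ • (Ψs + Complex.I • Ψt))) :
    ∀ j k, ∑ b, star (Ψs (j, b)) * Ψt (k, b) = 0 := by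
  intro j k
  have h := (reducedForm dA dB k j).apply_eq_zero_of_polarization
    (hs.reducedForm_self_eq_add ht hplus k j) (hs.reducedForm_self_eq_add ht hplusI k j)
  rw [reducedForm_apply] at h
  simpa only [mul_comm] using h
end

section
/- Let ρ be a density operator on ℂ^{d_A} ⊗ ℂ^{d_B} with spectral decomposition ρ = Σ_s λ_s |Ψ_s⟩⟨Ψ_s| (λ_s > 0, Ψ_s orthonormal). If every unit vector in the range of ρ is maximally entangled (its reduced B-trace is (1/d_A)I), then the reduced states Tr_A(|Ψ_s⟩⟨Ψ_s|) have pairwise orthogonal supports. -/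
/-!
Fix row indices `j, k` and let `V` be the range of `ρ`. Maximal entanglement says that the
sesquilinear form `(x, y) ↦ ∑_b conj (x (j, b)) * y (k, b)` takes the value
`c = δ_{jk} / d_A` at every unit vector `Φ ∈ V`. By scaling it agrees with `c • ⟪·, ·⟫` on the
diagonal of `V`, and a complex sesquilinear form is determined by its diagonal (polarization),
so it agrees with `c • ⟪·, ·⟫` on all of `V × V`. Since `λ_s ≠ 0`, every `Ψ_s` lies in `V`, and
the cross terms vanish because `⟪Ψ_s, Ψ_t⟫ = 0`.
-/

open scoped InnerProductSpace

theorem LinearMap.IsAlt.eq_zero {M : Type*} [AddCommGroup M] [Module ℂ M]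
    {B : M →ₗ⋆[ℂ] M →ₗ[ℂ] ℂ} (hB : B.IsAlt) : B = 0 := by
  ext x y
  have hsymm : -B x y = B y x := hB.neg x y
  have hskew : -B x (Complex.I • y) = B (Complex.I • y) x := hB.neg x _
  simp only [map_smul, LinearMap.smul_apply, smul_eq_mul, LinearMap.map_smulₛₗ,
    Complex.conj_I] at hskew
  simp only [LinearMap.zero_apply]
  linear_combination (-1 / 2 : ℂ) * hsymm + (Complex.I / 2) * hskew +
    (B x y - B y x) / 2 * Complex.I_sq

section

variable {E : Type*} [NormedAddCommGroup E] [InnerProductSpace ℂ E]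

theorem LinearMap.apply_self_eq_of_forall_norm_eq_one (B : E →ₗ⋆[ℂ] E →ₗ[ℂ] ℂ)
    {V : Submodule ℂ E} {c : ℂ} (h : ∀ x ∈ V, ‖x‖ = 1 → B x x = c) {x : E} (hx : x ∈ V) :
    B x x = c * ⟪x, x⟫_ℂ := by
  rcases eq_or_ne x 0 with rfl | hx0
  · simp
  have hunit := h _ (V.smul_mem ((‖x‖ : ℂ)⁻¹) hx) (norm_smul_inv_norm hx0)
  have hnorm : (‖x‖ : ℂ) ≠ 0 := by exact_mod_cast norm_ne_zero_iff.mpr hx0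
  simp only [map_smul, LinearMap.smul_apply, LinearMap.map_smulₛₗ, smul_eq_mul, map_inv₀,
    Complex.conj_ofReal] at hunit
  rw [← hunit, inner_self_eq_norm_sq_to_K, RCLike.ofReal_eq_complex_ofReal]
  field_simp

theorem LinearMap.apply_eq_mul_inner_of_forall_norm_eq_one (B : E →ₗ⋆[ℂ] E →ₗ[ℂ] ℂ)
    {V : Submodule ℂ E} {c : ℂ} (h : ∀ x ∈ V, ‖x‖ = 1 → B x x = c) {x y : E} (hx : x ∈ V)
    (hy : y ∈ V) : B x y = c * ⟪x, y⟫_ℂ := by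
  set D := (B - c • innerₛₗ ℂ).domRestrict₁₂ V V
  have hD : D.IsAlt := fun z => by
    simp [D, LinearMap.domRestrict₁₂_apply, B.apply_self_eq_of_forall_norm_eq_one h z.2]
  have := LinearMap.congr_fun₂ hD.eq_zero ⟨x, hx⟩ ⟨y, hy⟩
  simpa [D, LinearMap.domRestrict₁₂_apply, sub_eq_zero] using this

theorem sum_smul_rankOneOp_apply_of_orthonormal {ι : Type*} [Fintype ι] {v : ι → E}
    (hv : Orthonormal ℂ v) (c : ι → ℂ) (i : ι) :
    (∑ j, c j • rankOneOp (v j)) (v i) = c i • v i := by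
  classical
  simp [rankOneOp, orthonormal_iff_ite.mp hv]

theorem mem_range_sum_smul_rankOneOp_of_orthonormal {ι : Type*} [Fintype ι] {v : ι → E}
    (hv : Orthonormal ℂ v) {c : ι → ℂ} {i : ι} (hc : c i ≠ 0) :
    v i ∈ LinearMap.range (∑ j, c j • rankOneOp (v j)) :=
  ⟨(c i)⁻¹ • v i, by
    rw [map_smul, sum_smul_rankOneOp_apply_of_orthonormal hv, smul_smul, inv_mul_cancel₀ hc,
      one_smul]⟩

end

section

variable {ι κ : Type*} [Fintype κ]

/-- `rowInner j k Φ Φ` is the `(k, j)` entry of the reduced state `Tr_B |Φ⟩⟨Φ|`. -/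
noncomputable def rowInner (j k : ι) :
    EuclideanSpace ℂ (ι × κ) →ₗ⋆[ℂ] EuclideanSpace ℂ (ι × κ) →ₗ[ℂ] ℂ :=
  LinearMap.mk₂'ₛₗ _ _ (fun x y => ∑ b, star (x (j, b)) * y (k, b))
    (fun _ _ _ => by simp [add_mul, Finset.sum_add_distrib])
    (fun _ _ _ => by simp [Finset.mul_sum, mul_assoc])
    (fun _ _ _ => by simp [mul_add, Finset.sum_add_distrib])
    (fun _ _ _ => by simp [Finset.mul_sum, mul_left_comm])

theorem rowInner_apply (j k : ι) (x y : EuclideanSpace ℂ (ι × κ)) :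
    rowInner j k x y = ∑ b, star (x (j, b)) * y (k, b) := rfl

end

theorem stmt_15_general (dA dB n : ℕ)
    (Ψ : Fin n → EuclideanSpace ℂ (Fin dA × Fin dB)) (hon : Orthonormal ℂ Ψ)
    (lam : Fin n → ℝ) (hlam : ∀ s, 0 < lam s)
    (ρ : EuclideanSpace ℂ (Fin dA × Fin dB) →ₗ[ℂ] EuclideanSpace ℂ (Fin dA × Fin dB))
    (hρ : ρ = ∑ s, (lam s : ℂ) • rankOneOp (Ψ s))
    (hME : ∀ Φ ∈ LinearMap.range ρ, ‖Φ‖ = 1 →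
      ∀ a a', (∑ b, Φ (a, b) * star (Φ (a', b))) = if a = a' then ((dA : ℂ))⁻¹ else 0) :
    ∀ s t, s ≠ t → ∀ j k, ∑ b, star (Ψ s (j, b)) * Ψ t (k, b) = 0 := by
  intro s t hst j k
  have hmem : ∀ s, Ψ s ∈ LinearMap.range ρ := fun s =>
    hρ ▸ mem_range_sum_smul_rankOneOp_of_orthonormal hon (by exact_mod_cast (hlam s).ne')
  have hunit : ∀ Φ ∈ LinearMap.range ρ, ‖Φ‖ = 1 →
      rowInner j k Φ Φ = if k = j then ((dA : ℂ))⁻¹ else 0 := fun Φ hΦ h1 => by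
    rw [rowInner_apply, ← hME Φ hΦ h1 k j]
    exact Finset.sum_congr rfl fun b _ => mul_comm _ _
  rw [← rowInner_apply, (rowInner j k).apply_eq_mul_inner_of_forall_norm_eq_one hunit
    (hmem s) (hmem t), hon.2 hst, mul_zero]

theorem stmt_15 (dA dB n : ℕ) (hd : dA ≤ dB)
    (Ψ : Fin n → EuclideanSpace ℂ (Fin dA × Fin dB)) (hon : Orthonormal ℂ Ψ)
    (lam : Fin n → ℝ) (hlam : ∀ s, 0 < lam s) (hsum : ∑ s, lam s = 1)
    (ρ : EuclideanSpace ℂ (Fin dA × Fin dB) →ₗ[ℂ] EuclideanSpace ℂ (Fin dA × Fin dB))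
    (hρ : ρ = ∑ s, (lam s : ℂ) • rankOneOp (Ψ s))
    (hME : ∀ Φ ∈ LinearMap.range ρ, ‖Φ‖ = 1 →
      ∀ a a', (∑ b, Φ (a, b) * star (Φ (a', b))) = if a = a' then ((dA : ℂ))⁻¹ else 0) :
    ∀ s t, s ≠ t → ∀ j k, ∑ b, star (Ψ s (j, b)) * Ψ t (k, b) = 0 :=
  stmt_15_general dA dB n Ψ hon lam hlam ρ hρ hME
end

section
/- Suppose the orthonormal bases B_x = {ψ_{xk}} (x = 1,...,m) of ℂ^d have a connected transition graph, and suppose {σ_{xk}} is a family of positive semidefinite operators on ℂ^d such that Σ_k σ_{xk} = ρ for all x (with ρ a fixed density operator) and Σ_k ⟨ψ_{xk}, σ_{xk} ψ_{xk}⟩ = 1 for each x. Then ρ = (1/d) I and σ_{xk} = (1/d) |ψ_{xk}⟩⟨ψ_{xk}| for all x, k. -/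
/-!
Fix a basis `ψ_x` and put `q k l = ⟨ψ_l, σ_k ψ_l⟩ ≥ 0`. The double sum of `q` is `Tr ρ = 1`, and
so is its diagonal, so every off-diagonal `q k l` vanishes; for a positive semidefinite `σ_k` this
means `σ_k ψ_l = 0` for `l ≠ k`, which forces `σ_k = c_k |ψ_k⟩⟨ψ_k|` and `ρ ψ_k = c_k ψ_k`. Two
eigenvectors of the Hermitian `ρ` that are not orthogonal share their (real) eigenvalue, so `c` is
constant along the edges of the transition graph, hence constant, and `∑_k c_k = 1` gives `c = 1/d`.
-/

open scoped InnerProductSpace ComplexOrder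

open Matrix WithLp Finset

lemma Finset.eq_zero_of_sum_sum_eq_sum_diag {ι α : Type*} [Fintype ι] [AddCommGroup α]
    [PartialOrder α] [IsOrderedAddMonoid α] {q : ι → ι → α} (hq : ∀ k l, 0 ≤ q k l)
    (h : ∑ k, ∑ l, q k l = ∑ k, q k k) {k l : ι} (hlk : l ≠ k) : q k l = 0 := by
  classical
  have hoff : ∑ k, ∑ l ∈ univ.erase k, q k l = 0 := by
    rw [← sum_congr rfl fun k _ => add_sum_erase _ (q k) (mem_univ k), sum_add_distrib] at h
    exact add_eq_left.mp h
  rw [sum_eq_zero_iff_of_nonneg fun k _ => sum_nonneg fun l _ => hq k l] at hoff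
  exact (sum_eq_zero_iff_of_nonneg fun l _ => hq k l).mp (hoff k (mem_univ k)) l
    (mem_erase.mpr ⟨hlk, mem_univ l⟩)

lemma SimpleGraph.Preconnected.eq_of_adj {V α : Type*} {G : SimpleGraph V}
    (hG : G.Preconnected) {f : V → α} (hf : ∀ u v, G.Adj u v → f u = f v) (u v : V) :
    f u = f v := by
  obtain ⟨p⟩ := hG u v
  induction p with
  | nil => rfl
  | cons h _ ih => exact (hf _ _ h).trans ih

namespace Matrix.IsHermitian

variable {𝕜 n : Type*} [RCLike 𝕜] [Fintype n] {A : Matrix n n 𝕜}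

lemma star_dotProduct_mulVec_eq (hA : A.IsHermitian) (v w : n → 𝕜) :
    star v ⬝ᵥ A *ᵥ w = star (A *ᵥ v) ⬝ᵥ w := by
  rw [star_mulVec, hA.eq, dotProduct_mulVec]

lemma star_eq_of_mulVec_eq_smul (hA : A.IsHermitian) {v w : n → 𝕜} {α β : 𝕜}
    (hv : A *ᵥ v = α • v) (hw : A *ᵥ w = β • w) (hvw : star v ⬝ᵥ w ≠ 0) : star α = β := by
  refine mul_right_cancel₀ hvw ?_
  calc star α * (star v ⬝ᵥ w) = star (A *ᵥ v) ⬝ᵥ w := by simp [hv]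
    _ = star v ⬝ᵥ A *ᵥ w := (hA.star_dotProduct_mulVec_eq v w).symm
    _ = β * (star v ⬝ᵥ w) := by simp [hw]

end Matrix.IsHermitian

namespace OrthonormalBasis

variable {𝕜 n : Type*} [RCLike 𝕜] [Fintype n] (b : OrthonormalBasis n 𝕜 (EuclideanSpace 𝕜 n))

lemma star_dotProduct_ofLp (v w : EuclideanSpace 𝕜 n) : star v.ofLp ⬝ᵥ w.ofLp = ⟪v, w⟫_𝕜 := by
  rw [EuclideanSpace.inner_eq_star_dotProduct, dotProduct_comm]

lemma ext_star_dotProduct {v w : n → 𝕜}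
    (h : ∀ k, star (b k).ofLp ⬝ᵥ v = star (b k).ofLp ⬝ᵥ w) : v = w := by
  have := InnerProductSpace.ext_inner_left_basis b.toBasis (x := toLp 2 v) (y := toLp 2 w)
    fun k => by simpa [← star_dotProduct_ofLp] using h k
  simpa using this

variable [DecidableEq n]

lemma star_dotProduct_ofLp_eq_ite (k l : n) :
    star (b k).ofLp ⬝ᵥ (b l).ofLp = if k = l then 1 else 0 := by
  rw [star_dotProduct_ofLp, orthonormal_iff_ite.mp b.orthonormal]

lemma matrix_ext {M N : Matrix n n 𝕜} (h : ∀ l, M *ᵥ (b l).ofLp = N *ᵥ (b l).ofLp) : M = N :=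
  (toLpLin 2 2).injective <| b.toBasis.ext fun l => by simp [toLpLin_apply, h]

lemma sum_smul_vecMulVec_mulVec (c : n → 𝕜) (k : n) :
    (∑ l, c l • vecMulVec (b l).ofLp (star (b l).ofLp)) *ᵥ (b k).ofLp = c k • (b k).ofLp := by
  simp [sum_mulVec, smul_mulVec, vecMulVec_mulVec, b.star_dotProduct_ofLp_eq_ite]

lemma sum_vecMulVec_star : ∑ k, vecMulVec (b k).ofLp (star (b k).ofLp) = 1 :=
  b.matrix_ext fun l => by simpa using b.sum_smul_vecMulVec_mulVec 1 l

lemma trace_eq_sum (M : Matrix n n 𝕜) :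
    M.trace = ∑ k, star (b k).ofLp ⬝ᵥ M *ᵥ (b k).ofLp := by
  rw [← trace_toLin_eq M (PiLp.basisFun 2 𝕜 n), ← toLpLin_eq_toLin,
    LinearMap.trace_eq_sum_inner _ b]
  simp [← star_dotProduct_ofLp, toLpLin_apply]

lemma eq_smul_vecMulVec_of_mulVec_eq_zero {A : Matrix n n 𝕜} (hA : A.IsHermitian) {k : n}
    (h : ∀ l, l ≠ k → A *ᵥ (b l).ofLp = 0) :
    A = (star (b k).ofLp ⬝ᵥ A *ᵥ (b k).ofLp) • vecMulVec (b k).ofLp (star (b k).ofLp) := by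
  refine b.matrix_ext fun l => ?_
  rw [smul_mulVec, vecMulVec_mulVec, op_smul_eq_smul, b.star_dotProduct_ofLp_eq_ite]
  rcases eq_or_ne l k with rfl | hlk
  · refine b.ext_star_dotProduct fun j => ?_
    rcases eq_or_ne j l with rfl | hjl
    · simp [b.star_dotProduct_ofLp_eq_ite]
    · simp [hA.star_dotProduct_mulVec_eq, h j hjl, b.star_dotProduct_ofLp_eq_ite, hjl]
  · simp [h l hlk, Ne.symm hlk]

lemma eq_smul_vecMulVec_of_sum_trace_eq {σ : n → Matrix n n 𝕜} (hσ : ∀ k, (σ k).PosSemidef)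
    (h : ∑ k, (σ k).trace = ∑ k, star (b k).ofLp ⬝ᵥ σ k *ᵥ (b k).ofLp) (k : n) :
    σ k = (star (b k).ofLp ⬝ᵥ σ k *ᵥ (b k).ofLp) • vecMulVec (b k).ofLp (star (b k).ofLp) := by
  refine b.eq_smul_vecMulVec_of_mulVec_eq_zero (hσ k).isHermitian fun l hlk => ?_
  rw [← (hσ k).dotProduct_mulVec_zero_iff]
  refine eq_zero_of_sum_sum_eq_sum_diag (q := fun k l => star (b l).ofLp ⬝ᵥ σ k *ᵥ (b l).ofLp)
    (fun k l => (hσ k).dotProduct_mulVec_nonneg _) ?_ hlk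
  simpa [← b.trace_eq_sum] using h

end OrthonormalBasis

theorem stmt_16_general (d m : ℕ)
    (ψ : Fin m → OrthonormalBasis (Fin d) ℂ (EuclideanSpace ℂ (Fin d)))
    (G : SimpleGraph (Fin m × Fin d))
    (hG : ∀ v w, G.Adj v w ↔ v ≠ w ∧ ⟪ψ v.1 v.2, ψ w.1 w.2⟫_ℂ ≠ 0)
    (hconn : G.Connected)
    (ρ : Matrix (Fin d) (Fin d) ℂ) (hρ : ρ.PosSemidef) (htr : ρ.trace = 1)
    (σ : Fin m → Fin d → Matrix (Fin d) (Fin d) ℂ)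
    (hσ : ∀ x k, (σ x k).PosSemidef)
    (hsum : ∀ x, ∑ k, σ x k = ρ)
    (hpass : ∀ x, ∑ k, dotProduct (star (fun i => ψ x k i))
      ((σ x k).mulVec (fun i => ψ x k i)) = 1) :
    ρ = ((d : ℂ))⁻¹ • (1 : Matrix (Fin d) (Fin d) ℂ) ∧
      ∀ x k, σ x k = ((d : ℂ))⁻¹ •
        Matrix.vecMulVec (fun i => ψ x k i) (star (fun i => ψ x k i)) := by
  set c : Fin m × Fin d → ℂ := fun a => star (ψ a.1 a.2).ofLp ⬝ᵥ σ a.1 a.2 *ᵥ (ψ a.1 a.2).ofLp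
  have hσc : ∀ x k, σ x k = c (x, k) • vecMulVec (ψ x k).ofLp (star (ψ x k).ofLp) := fun x =>
    (ψ x).eq_smul_vecMulVec_of_sum_trace_eq (hσ x) <| by
      rw [← trace_sum, hsum x, htr]
      exact (hpass x).symm
  have hρc : ∀ a : Fin m × Fin d, ρ *ᵥ (ψ a.1 a.2).ofLp = c a • (ψ a.1 a.2).ofLp := fun a => by
    rw [← hsum a.1, sum_congr rfl fun l _ => hσc a.1 l]
    exact (ψ a.1).sum_smul_vecMulVec_mulVec (fun l => c (a.1, l)) a.2
  have hadj : ∀ a a', G.Adj a a' → c a = c a' := fun a a' haa' => by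
    have hinner := ((hG a a').mp haa').2
    rw [← OrthonormalBasis.star_dotProduct_ofLp] at hinner
    rw [← hρ.isHermitian.star_eq_of_mulVec_eq_smul (hρc a) (hρc a') hinner]
    exact ((hσ a.1 a.2).dotProduct_mulVec_nonneg _).isSelfAdjoint.symm
  obtain ⟨a₀⟩ := hconn.nonempty
  have hconst : ∀ a, c a = c a₀ := fun a => hconn.preconnected.eq_of_adj hadj a a₀
  have hc : ∀ a, c a = (d : ℂ)⁻¹ := fun a => by
    have hsum_c : ∑ k, c (a₀.1, k) = 1 := hpass a₀.1
    rw [sum_congr rfl fun k _ => hconst (a₀.1, k), sum_const, card_univ, Fintype.card_fin,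
      nsmul_eq_mul] at hsum_c
    rw [hconst a]
    exact eq_inv_of_mul_eq_one_left (by rwa [mul_comm] at hsum_c)
  have hσd : ∀ x k, σ x k = (d : ℂ)⁻¹ • vecMulVec (ψ x k).ofLp (star (ψ x k).ofLp) :=
    fun x k => by rw [hσc, hc]
  refine ⟨?_, hσd⟩
  rw [← hsum a₀.1, sum_congr rfl fun k _ => hσd a₀.1 k, ← smul_sum, (ψ a₀.1).sum_vecMulVec_star]

theorem stmt_16 (d m : ℕ) (hd : 0 < d)
    (ψ : Fin m → OrthonormalBasis (Fin d) ℂ (EuclideanSpace ℂ (Fin d)))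
    (G : SimpleGraph (Fin m × Fin d))
    (hG : ∀ v w, G.Adj v w ↔ v ≠ w ∧ ⟪ψ v.1 v.2, ψ w.1 w.2⟫_ℂ ≠ 0)
    (hconn : G.Connected)
    (ρ : Matrix (Fin d) (Fin d) ℂ) (hρ : ρ.PosSemidef) (htr : ρ.trace = 1)
    (σ : Fin m → Fin d → Matrix (Fin d) (Fin d) ℂ)
    (hσ : ∀ x k, (σ x k).PosSemidef)
    (hsum : ∀ x, ∑ k, σ x k = ρ)
    (hpass : ∀ x, ∑ k, dotProduct (star (fun i => ψ x k i))
      ((σ x k).mulVec (fun i => ψ x k i)) = 1) :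
    ρ = ((d : ℂ))⁻¹ • (1 : Matrix (Fin d) (Fin d) ℂ) ∧
      ∀ x k, σ x k = ((d : ℂ))⁻¹ •
        Matrix.vecMulVec (fun i => ψ x k i) (star (fun i => ψ x k i)) :=
  stmt_16_general d m ψ G hG hconn ρ hρ htr σ hσ hsum hpass
end

section
/- Let B_x = {ψ_{xk}} (x = 1,...,m) be orthonormal bases of ℂ^d whose transition graph has connected components G_1,...,G_g. For each component a and each x, let B_x^a ⊆ B_x be the basis vectors whose vertices lie in G_a, and let P_a^x = Σ_{ψ ∈ B_x^a} |ψ⟩⟨ψ|. Then P_a^x is independent of x, i.e., P_a^x = P_a^y for all x, y; in particular the component subspaces span(B_x^a) coincide for all x. -/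
/-!
Vectors lying in different connected components of the transition graph are orthogonal, since
non-orthogonal vectors are adjacent. Hence the component-`a` projector built from `B x` fixes every
vector of `B y` in component `a` and kills every other one: expanding such a vector in `B x`, only
coefficients inside its own component survive. The projectors from `B x` and `B y` therefore agree
on the basis `B y`.
-/

open scoped InnerProductSpace
open Matrix WithLp

section
variable {𝕜 ι n : Type*} [RCLike 𝕜] [Fintype n]

theorem Matrix.vecMulVec_star_mulVec_ofLp (u v : EuclideanSpace 𝕜 n) :
    vecMulVec (ofLp u) (star (ofLp u)) *ᵥ ofLp v = ⟪u, v⟫_𝕜 • ofLp u := by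
  rw [vecMulVec_mulVec, op_smul_eq_smul, EuclideanSpace.inner_eq_star_dotProduct, dotProduct_comm]

theorem Matrix.ext_of_mulVec_basis [DecidableEq n] {M N : Matrix n n 𝕜}
    (b : Module.Basis ι 𝕜 (EuclideanSpace 𝕜 n))
    (h : ∀ k, M *ᵥ ofLp (b k) = N *ᵥ ofLp (b k)) : M = N := by
  refine toEuclideanLin.injective (b.ext fun k => ofLp_injective 2 ?_)
  rw [ofLp_toLpLin, ofLp_toLpLin, toLin'_apply, toLin'_apply, h]

theorem OrthonormalBasis.sum_ite_vecMulVec_mulVec_eq_ite [Fintype ι]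
    (b : OrthonormalBasis ι 𝕜 (EuclideanSpace 𝕜 n)) (p : ι → Prop) [DecidablePred p]
    (q : Prop) [Decidable q] (v : EuclideanSpace 𝕜 n) (h : ∀ k, ⟪b k, v⟫_𝕜 ≠ 0 → (p k ↔ q)) :
    (∑ k, if p k then vecMulVec (ofLp (b k)) (star (ofLp (b k))) else 0) *ᵥ ofLp v =
      if q then ofLp v else 0 := by
  have hsum : (∑ k, if p k then vecMulVec (ofLp (b k)) (star (ofLp (b k))) else 0) *ᵥ ofLp v =
      ofLp (∑ k with p k, ⟪b k, v⟫_𝕜 • b k) := by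
    rw [sum_mulVec, Finset.sum_filter, ofLp_sum]
    refine Finset.sum_congr rfl fun k _ => ?_
    split_ifs
    · rw [vecMulVec_star_mulVec_ofLp, ofLp_smul]
    · rw [zero_mulVec, ofLp_zero]
  rw [hsum]
  split_ifs with hq
  · conv_rhs => rw [← b.sum_repr' v]
    refine congrArg ofLp (Finset.sum_filter_of_ne fun k _ hk => (h k (left_ne_zero_of_smul hk)).2 hq)
  · refine congrArg ofLp (Finset.sum_eq_zero fun k hk => ?_)
    by_contra hk'
    exact hq ((h k (left_ne_zero_of_smul hk')).1 (Finset.mem_filter.1 hk).2)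
end

theorem SimpleGraph.connectedComponentMk_eq_of_inner_ne_zero {𝕜 V E : Type*} [RCLike 𝕜]
    [NormedAddCommGroup E] [InnerProductSpace 𝕜 E] {G : SimpleGraph V} (f : V → E)
    (hG : ∀ v w, v ≠ w → ⟪f v, f w⟫_𝕜 ≠ 0 → G.Adj v w) {v w : V} (h : ⟪f v, f w⟫_𝕜 ≠ 0) :
    G.connectedComponentMk v = G.connectedComponentMk w := by
  rcases eq_or_ne v w with rfl | hvw
  · rfl
  · exact ConnectedComponent.connectedComponentMk_eq_of_adj (hG v w hvw h)

open scoped Classical in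
theorem stmt_18 (d m : ℕ)
    (B : Fin m → OrthonormalBasis (Fin d) ℂ (EuclideanSpace ℂ (Fin d)))
    (G : SimpleGraph (Fin m × Fin d))
    (hG : ∀ v w, G.Adj v w ↔ v ≠ w ∧ ⟪B v.1 v.2, B w.1 w.2⟫_ℂ ≠ 0) :
    ∀ (a : G.ConnectedComponent) (x y : Fin m),
      (∑ k, if G.connectedComponentMk (x, k) = a then
          Matrix.vecMulVec (fun i => B x k i) (star (fun i => B x k i)) else 0) =
        ∑ k, if G.connectedComponentMk (y, k) = a then
          Matrix.vecMulVec (fun i => B y k i) (star (fun i => B y k i)) else 0 := by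
  intro a x y
  have hmk : ∀ v w, ⟪B v.1 v.2, B w.1 w.2⟫_ℂ ≠ 0 →
      G.connectedComponentMk v = G.connectedComponentMk w :=
    fun v w => G.connectedComponentMk_eq_of_inner_ne_zero (fun v => B v.1 v.2)
      fun v w hvw h => (hG v w).2 ⟨hvw, h⟩
  have hproj : ∀ z l, (∑ k, if G.connectedComponentMk (z, k) = a then
        vecMulVec (ofLp (B z k)) (star (ofLp (B z k))) else 0) *ᵥ ofLp (B y l) =
      if G.connectedComponentMk (y, l) = a then ofLp (B y l) else 0 :=
    fun z l => (B z).sum_ite_vecMulVec_mulVec_eq_ite _ _ _ fun k hk => by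
      rw [hmk (z, k) (y, l) hk]
  exact ext_of_mulVec_basis (B y).toBasis fun l => by
    rw [OrthonormalBasis.coe_toBasis, hproj x, hproj y]
end
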